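/- arXiv:1509.08786 — 2 statements merged into one kernel-verified Lean document; each statement's English description precedes it below -/
import Mathlib

section
/- Let H be a Hilbert space, K a closed subspace, S the orthogonal projection onto K, C a bounded projection of H onto K, and A = C* − C. If I − A is invertible with bounded inverse, then S = C ∘ (I − A)⁻¹. -/
open ContinuousLinearMap

/-
With `S` the orthogonal projection onto `K` and `A = C† - C`: since `C` and `S` are idempotents
with the same range, `S C = C` and `C S = S`; taking adjoints of the latter gives `S C† = S`.
Hence `S (1 - A) = S - S C† + S C = C`, and multiplying on the right by a right inverse `B` of
`1 - A` gives `S = C B`.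
-/

namespace ContinuousLinearMap

variable {𝕜 E : Type*} [RCLike 𝕜] [NormedAddCommGroup E] [InnerProductSpace 𝕜 E]
  {K : Submodule 𝕜 E} [K.HasOrthogonalProjection] {C : E →L[𝕜] E}

theorem starProjection_mul_of_range_le (h : LinearMap.range (C : E →ₗ[𝕜] E) ≤ K) :
    K.starProjection * C = C := by
  rw [← K.range_starProjection] at h
  exact coe_injective <|
    (LinearMap.IsIdempotentElem.comp_eq_right_iff K.isIdempotentElem_starProjection.toLinearMap
      _).2 h

theorem mul_starProjection_of_le_range (hC : IsIdempotentElem C)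
    (h : K ≤ LinearMap.range (C : E →ₗ[𝕜] E)) : C * K.starProjection = K.starProjection := by
  rw [← K.range_starProjection] at h
  exact coe_injective <| (LinearMap.IsIdempotentElem.comp_eq_right_iff hC.toLinearMap _).2 h

variable [CompleteSpace E]

theorem starProjection_mul_adjoint_of_le_range (hC : IsIdempotentElem C)
    (h : K ≤ LinearMap.range (C : E →ₗ[𝕜] E)) : K.starProjection * adjoint C = K.starProjection := by
  have hS : star K.starProjection = K.starProjection := isSelfAdjoint_starProjection K
  rw [← star_eq_adjoint, ← hS, ← star_mul, mul_starProjection_of_le_range hC h]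

theorem starProjection_mul_one_sub_adjoint_sub (hC : IsIdempotentElem C)
    (h : LinearMap.range (C : E →ₗ[𝕜] E) = K) :
    K.starProjection * (1 - (adjoint C - C)) = C := by
  rw [mul_sub, mul_sub, mul_one, starProjection_mul_adjoint_of_le_range hC h.ge,
    starProjection_mul_of_range_le h.le, sub_sub_cancel]

end ContinuousLinearMap

theorem stmt5_general {H : Type*} [NormedAddCommGroup H] [InnerProductSpace ℂ H] [CompleteSpace H]
    (K : Submodule ℂ H) [K.HasOrthogonalProjection]
    (C : H →L[ℂ] H) (hidem : C ∘L C = C)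
    (hrange : LinearMap.range (C : H →ₗ[ℂ] H) = K)
    (B : H →L[ℂ] H)
    (hB₁ : (1 - (ContinuousLinearMap.adjoint C - C)) ∘L B = 1) :
    K.subtypeL ∘L K.orthogonalProjectionOnto = C ∘L B := by
  have hC : IsIdempotentElem C := hidem
  change K.starProjection = C * B
  calc K.starProjection = K.starProjection * ((1 - (adjoint C - C)) * B) := by
        rw [show (1 - (adjoint C - C)) * B = 1 from hB₁, mul_one]
    _ = C * B := by rw [← mul_assoc, starProjection_mul_one_sub_adjoint_sub hC hrange]

theorem stmt5 {H : Type*} [NormedAddCommGroup H] [InnerProductSpace ℂ H] [CompleteSpace H]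
    (K : Submodule ℂ H) [K.HasOrthogonalProjection]
    (C : H →L[ℂ] H) (hidem : C ∘L C = C)
    (hrange : LinearMap.range (C : H →ₗ[ℂ] H) = K)
    (B : H →L[ℂ] H)
    (hB₁ : (1 - (ContinuousLinearMap.adjoint C - C)) ∘L B = 1)
    (hB₂ : B ∘L (1 - (ContinuousLinearMap.adjoint C - C)) = 1) :
    K.subtypeL ∘L K.orthogonalProjectionOnto = C ∘L B :=
  stmt5_general K C hidem hrange B hB₁
end

section
/- Let ρ : ℂⁿ → ℝ be C² and strictly plurisubharmonic near a point w (i.e., the complex Hessian Σ ∂²ρ/∂ζᵢ∂ζ̄ⱼ(w) vᵢ v̄ⱼ ≥ c|v|² for all v ∈ ℂⁿ). Define η_j(w,z) = ∂ρ/∂ζⱼ(w) − ½ Σᵢ ∂²ρ/∂ζᵢ∂ζⱼ(w)(wᵢ − zᵢ). Then by second-order Taylor expansion, 2 Re⟨η(w,z), w−z⟩ = ρ(w) − ρ(z) + Σᵢⱼ ∂²ρ/∂ζᵢ∂ζ̄ⱼ(w)(wᵢ−zᵢ)(w̄ⱼ−z̄ⱼ) + o(|w−z|²). Consequently, if ρ(w)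 = 0 and ρ(z) ≤ 0, then Re⟨η(w,z), w−z⟩ ≥ (c/4)|w−z|² for |w−z| sufficiently small. -/
/-!
In real coordinates, every real-linear `L : ℂⁿ → ℂ` satisfies `L h = ∑ⱼ (∂L/∂ζⱼ hⱼ + ∂L/∂ζ̄ⱼ h̄ⱼ)`,
and for real-valued `L` the two coefficients are conjugate. Applied to `Dρ(w)` and, twice, to
`D²ρ(w)`, this gives `Dρ(w) h = 2 Re ∑ⱼ ∂ⱼρ hⱼ` and
`D²ρ(w)(h, h) = 2 Re (∑ ∂ᵢ∂ⱼρ hᵢhⱼ + ∑ ∂ᵢ∂̄ⱼρ hᵢh̄ⱼ)`. So, with `h = w - z`, the quantity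
`2 Re⟨η, w - z⟩ - (ρ(w) - ρ(z) + Levi form)` is exactly the remainder of the second-order Taylor
expansion of `ρ` at `w`. Taking `ε = c/2` in the little-o bound, `ρ(w) = 0`, `ρ(z) ≤ 0` and the
lower bound `c|h|²` on the Levi form give `2 Re⟨η, w - z⟩ ≥ (c/2)|h|²`.
-/

open Complex Asymptotics

/-- The Wirtinger derivative `∂g/∂ζⱼ` of a complex-valued function on `ℂⁿ`,
computed from the real Fréchet derivative:
`∂g/∂ζⱼ(w) = ½ (Dg(w)(eⱼ) - i · Dg(w)(i eⱼ))`. -/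
noncomputable def wirt {n : ℕ} (g : EuclideanSpace ℂ (Fin n) → ℂ) (j : Fin n)
    (w : EuclideanSpace ℂ (Fin n)) : ℂ :=
  (1 / 2 : ℂ) * (fderiv ℝ g w (EuclideanSpace.single j 1) -
    Complex.I * fderiv ℝ g w (Complex.I • EuclideanSpace.single j 1))

/-- The conjugate Wirtinger derivative `∂g/∂ζ̄ⱼ`:
`∂g/∂ζ̄ⱼ(w) = ½ (Dg(w)(eⱼ) + i · Dg(w)(i eⱼ))`. -/
noncomputable def wirtBar {n : ℕ} (g : EuclideanSpace ℂ (Fin n) → ℂ) (j : Fin n)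
    (w : EuclideanSpace ℂ (Fin n)) : ℂ :=
  (1 / 2 : ℂ) * (fderiv ℝ g w (EuclideanSpace.single j 1) +
    Complex.I * fderiv ℝ g w (Complex.I • EuclideanSpace.single j 1))

open Filter Topology ContinuousLinearMap ComplexConjugate

/-- The remainder has derivative `Df(z) - Df(w) - B(z - w) = o(‖z - w‖)` (using the symmetry of
`B = D²f(w)`), and `Convex.isLittleO_pow_succ` integrates this bound. -/
theorem taylor_two_isLittleO {E F : Type*} [NormedAddCommGroup E] [NormedSpace ℝ E]
    [NormedAddCommGroup F] [NormedSpace ℝ F] {f : E → F} (hf : Differentiable ℝ f) {w : E}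
    (hf' : DifferentiableAt ℝ (fderiv ℝ f) w) :
    (fun z => f z - f w - fderiv ℝ f w (z - w)
        - (1 / 2 : ℝ) • fderiv ℝ (fderiv ℝ f) w (z - w) (z - w)) =o[𝓝 w]
      fun z => ‖z - w‖ ^ 2 := by
  set B := fderiv ℝ (fderiv ℝ f) w
  have hsymm : ∀ u v, B u v = B v u :=
    second_derivative_symmetric (fun y => (hf y).hasFDerivAt) hf'.hasFDerivAt
  have hderiv : ∀ z, HasFDerivAt
      (fun z => f z - fderiv ℝ f w (z - w) - (1 / 2 : ℝ) • B (z - w) (z - w))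
      (fderiv ℝ f z - fderiv ℝ f w - B (z - w)) z := by
    intro z
    have hsub := (hasFDerivAt_id (𝕜 := ℝ) z).sub_const w
    have hsq := (B.hasFDerivAt.comp z hsub).clm_apply hsub
    refine (((hf z).hasFDerivAt.sub ((fderiv ℝ f w).hasFDerivAt.comp z hsub)).sub
      (hsq.const_smul (1 / 2 : ℝ))).congr_fderiv ?_
    ext v
    simp only [comp_id, one_div, id_eq, Function.comp_apply, map_sub, smul_add, sub_apply,
      add_apply, smul_apply, flip_apply, hsymm v, sub_right_inj]
    module
  have hsmall : (fun z => fderiv ℝ f z - fderiv ℝ f w - B (z - w)) =o[𝓝 w]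
      fun z => ‖z - w‖ ^ 1 := by
    simpa only [pow_one, map_sub, isLittleO_norm_right] using hf'.hasFDerivAt.isLittleO
  have := convex_univ.isLittleO_pow_succ (n := 1) (Set.mem_univ w)
    (fun z _ => (hderiv z).hasFDerivWithinAt) (by simpa using hsmall)
  simp only [nhdsWithin_univ] at this
  convert this using 2 with z
  simp only [map_sub, one_div, sub_apply, sub_self, map_zero, sub_zero, smul_zero]
  abel

section Wirtinger

variable {n : ℕ}

noncomputable def wirtCLM (j : Fin n) : (EuclideanSpace ℂ (Fin n) →L[ℝ] ℂ) →L[ℝ] ℂ :=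
  (1 / 2 : ℂ) • (apply ℝ ℂ (EuclideanSpace.single j 1) -
    I • apply ℝ ℂ (I • EuclideanSpace.single j 1))

noncomputable def wirtBarCLM (j : Fin n) : (EuclideanSpace ℂ (Fin n) →L[ℝ] ℂ) →L[ℝ] ℂ :=
  (1 / 2 : ℂ) • (apply ℝ ℂ (EuclideanSpace.single j 1) +
    I • apply ℝ ℂ (I • EuclideanSpace.single j 1))

@[simp]
lemma wirtCLM_apply (j : Fin n) (L : EuclideanSpace ℂ (Fin n) →L[ℝ] ℂ) :
    wirtCLM j L = (1 / 2 : ℂ) * (L (EuclideanSpace.single j 1) -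
      I * L (I • EuclideanSpace.single j 1)) :=
  rfl

@[simp]
lemma wirtBarCLM_apply (j : Fin n) (L : EuclideanSpace ℂ (Fin n) →L[ℝ] ℂ) :
    wirtBarCLM j L = (1 / 2 : ℂ) * (L (EuclideanSpace.single j 1) +
      I * L (I • EuclideanSpace.single j 1)) :=
  rfl

lemma wirt_eq_wirtCLM (g : EuclideanSpace ℂ (Fin n) → ℂ) (j : Fin n) (w) :
    wirt g j w = wirtCLM j (fderiv ℝ g w) :=
  rfl

lemma EuclideanSpace.complex_apply_eq_sum {F : Type*} [AddCommGroup F] [Module ℝ F]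
    [TopologicalSpace F] (T : EuclideanSpace ℂ (Fin n) →L[ℝ] F) (h : EuclideanSpace ℂ (Fin n)) :
    T h = ∑ j, ((h j).re • T (EuclideanSpace.single j 1) +
      (h j).im • T (I • EuclideanSpace.single j 1)) := by
  have hdecomp (j : Fin n) : h j • EuclideanSpace.single j (1 : ℂ) =
      (h j).re • EuclideanSpace.single j 1 + (h j).im • (I • EuclideanSpace.single j 1) := by
    conv_lhs => rw [← (h j).re_add_im]
    rw [add_smul, mul_smul, Complex.coe_smul, Complex.coe_smul]
  conv_lhs => rw [← (EuclideanSpace.basisFun (Fin n) ℂ).sum_repr h]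
  simp [hdecomp]

lemma apply_eq_sum_wirtCLM (L : EuclideanSpace ℂ (Fin n) →L[ℝ] ℂ)
    (h : EuclideanSpace ℂ (Fin n)) :
    L h = ∑ j, (wirtCLM j L * h j + wirtBarCLM j L * conj (h j)) := by
  rw [EuclideanSpace.complex_apply_eq_sum L h]
  refine Finset.sum_congr rfl fun j _ => ?_
  apply Complex.ext <;> simp <;> ring

lemma apply_apply_eq_sum_wirtCLM
    (B : EuclideanSpace ℂ (Fin n) →L[ℝ] EuclideanSpace ℂ (Fin n) →L[ℝ] ℂ)
    (h : EuclideanSpace ℂ (Fin n)) :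
    B h h = ∑ j, ∑ i,
      ((wirtCLM i (wirtCLM j ∘L B) * h i + wirtBarCLM i (wirtCLM j ∘L B) * conj (h i)) * h j +
       (wirtCLM i (wirtBarCLM j ∘L B) * h i + wirtBarCLM i (wirtBarCLM j ∘L B) * conj (h i)) *
        conj (h j)) := by
  rw [apply_eq_sum_wirtCLM (B h)]
  refine Finset.sum_congr rfl fun j _ => ?_
  rw [← comp_apply (wirtCLM j) B, ← comp_apply (wirtBarCLM j) B,
    apply_eq_sum_wirtCLM (wirtCLM j ∘L B), apply_eq_sum_wirtCLM (wirtBarCLM j ∘L B),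
    Finset.sum_mul, Finset.sum_mul, ← Finset.sum_add_distrib]

lemma wirtBarCLM_eq_conj {L L' : EuclideanSpace ℂ (Fin n) →L[ℝ] ℂ} (hL : ∀ v, L' v = conj (L v))
    (j : Fin n) : wirtBarCLM j L' = conj (wirtCLM j L) := by
  simp only [wirtBarCLM_apply, wirtCLM_apply, hL, map_mul, map_sub, conj_I, map_div₀, map_one,
    map_ofNat]
  ring

lemma re_apply_eq_two_mul_re_sum_wirtCLM (L : EuclideanSpace ℂ (Fin n) →L[ℝ] ℂ)
    (hL : ∀ v, conj (L v) = L v) (h : EuclideanSpace ℂ (Fin n)) :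
    (L h).re = 2 * (∑ j, wirtCLM j L * h j).re := by
  have hbar (j : Fin n) : wirtBarCLM j L = conj (wirtCLM j L) :=
    wirtBarCLM_eq_conj (fun v => (hL v).symm) j
  simp only [apply_eq_sum_wirtCLM L h, hbar, ← map_mul, re_sum, Finset.mul_sum, add_re, conj_re]
  exact Finset.sum_congr rfl fun j _ => by ring

lemma re_apply_apply_eq_two_mul_re_sum_wirtCLM
    (B : EuclideanSpace ℂ (Fin n) →L[ℝ] EuclideanSpace ℂ (Fin n) →L[ℝ] ℂ)
    (hB : ∀ u v, conj (B u v) = B u v) (h : EuclideanSpace ℂ (Fin n)) :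
    (B h h).re = 2 * ((∑ j, ∑ i, wirtCLM i (wirtCLM j ∘L B) * h i * h j).re +
      (∑ i, ∑ j, wirtCLM i (wirtBarCLM j ∘L B) * h i * conj (h j)).re) := by
  have hbar (j : Fin n) (v) : wirtBarCLM j (B v) = conj (wirtCLM j (B v)) :=
    wirtBarCLM_eq_conj (fun u => (hB v u).symm) j
  have hbarbar (i j : Fin n) :
      wirtBarCLM i (wirtBarCLM j ∘L B) = conj (wirtCLM i (wirtCLM j ∘L B)) :=
    wirtBarCLM_eq_conj (fun v => hbar j v) i
  have hbar_wirt (i j : Fin n) :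
      wirtBarCLM i (wirtCLM j ∘L B) = conj (wirtCLM i (wirtBarCLM j ∘L B)) :=
    wirtBarCLM_eq_conj (fun v => by simp only [comp_apply, hbar, conj_conj]) i
  rw [apply_apply_eq_sum_wirtCLM, Finset.sum_comm (γ := Fin n) (f := fun i j => _ * conj _),
    re_sum, re_sum, re_sum, mul_add, Finset.mul_sum, Finset.mul_sum, ← Finset.sum_add_distrib]
  refine Finset.sum_congr rfl fun j _ => ?_
  rw [re_sum, re_sum, re_sum, Finset.mul_sum, Finset.mul_sum, ← Finset.sum_add_distrib]
  refine Finset.sum_congr rfl fun i _ => ?_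
  simp only [hbarbar, hbar_wirt, add_re, add_im, mul_re, mul_im, conj_re, conj_im]
  ring

lemma fderiv_wirt {g : EuclideanSpace ℂ (Fin n) → ℂ} {w : EuclideanSpace ℂ (Fin n)}
    (hg : DifferentiableAt ℝ (fderiv ℝ g) w) (j : Fin n) :
    fderiv ℝ (wirt g j) w = wirtCLM j ∘L fderiv ℝ (fderiv ℝ g) w :=
  ((wirtCLM j).hasFDerivAt.comp w hg.hasFDerivAt).fderiv

lemma fderiv_wirtBar {g : EuclideanSpace ℂ (Fin n) → ℂ} {w : EuclideanSpace ℂ (Fin n)}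
    (hg : DifferentiableAt ℝ (fderiv ℝ g) w) (j : Fin n) :
    fderiv ℝ (wirtBar g j) w = wirtBarCLM j ∘L fderiv ℝ (fderiv ℝ g) w :=
  ((wirtBarCLM j).hasFDerivAt.comp w hg.hasFDerivAt).fderiv

end Wirtinger

lemma fderiv_ofReal_comp {E : Type*} [NormedAddCommGroup E] [NormedSpace ℝ E] {ρ : E → ℝ}
    {z : E} (hρ : DifferentiableAt ℝ ρ z) :
    fderiv ℝ (fun z => (ρ z : ℂ)) z = ofRealCLM ∘L fderiv ℝ ρ z :=
  (ofRealCLM.hasFDerivAt.comp z hρ.hasFDerivAt).fderiv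

lemma hasFDerivAt_fderiv_ofReal_comp {E : Type*} [NormedAddCommGroup E] [NormedSpace ℝ E]
    {ρ : E → ℝ} {w : E} (hρ : Differentiable ℝ ρ) (hρ' : DifferentiableAt ℝ (fderiv ℝ ρ) w) :
    HasFDerivAt (fderiv ℝ fun z => (ρ z : ℂ))
      (compL ℝ E ℝ ℂ ofRealCLM ∘L fderiv ℝ (fderiv ℝ ρ) w) w := by
  have hfd : (fderiv ℝ fun z => (ρ z : ℂ)) = fun z => compL ℝ E ℝ ℂ ofRealCLM (fderiv ℝ ρ z) :=
    funext fun z => fderiv_ofReal_comp (hρ z)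
  rw [hfd]
  exact (compL ℝ E ℝ ℂ ofRealCLM).hasFDerivAt.comp w hρ'.hasFDerivAt

section RealFunction

variable {n : ℕ} (ρ : EuclideanSpace ℂ (Fin n) → ℝ)

/-- `⟨η(w, z), w - z⟩`, where `ηⱼ(w, z) = ∂ρ/∂ζⱼ(w) - ½ ∑ᵢ ∂²ρ/∂ζᵢ∂ζⱼ(w) (wᵢ - zᵢ)`. -/
noncomputable def etaPairing (w z : EuclideanSpace ℂ (Fin n)) : ℂ :=
  ∑ j, (wirt (fun z' => (ρ z' : ℂ)) j w -
    (1 / 2 : ℂ) * ∑ i, wirt (wirt (fun z' => (ρ z' : ℂ)) j) i w * (w i - z i)) * (w j - z j)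

noncomputable def leviForm (w v : EuclideanSpace ℂ (Fin n)) : ℂ :=
  ∑ i, ∑ j, wirt (wirtBar (fun z => (ρ z : ℂ)) j) i w * v i * conj (v j)

variable {ρ}

lemma two_mul_re_sum_wirt_mul {w : EuclideanSpace ℂ (Fin n)} (hρ : DifferentiableAt ℝ ρ w)
    (h : EuclideanSpace ℂ (Fin n)) :
    2 * (∑ j, wirt (fun z => (ρ z : ℂ)) j w * h j).re = fderiv ℝ ρ w h := by
  have hre := re_apply_eq_two_mul_re_sum_wirtCLM (fderiv ℝ (fun z => (ρ z : ℂ)) w)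
    (fun v => by simp [fderiv_ofReal_comp hρ]) h
  simp only [wirt_eq_wirtCLM]
  simpa [fderiv_ofReal_comp hρ] using hre.symm

lemma two_mul_re_sum_wirt_wirt_add_re_leviForm {w : EuclideanSpace ℂ (Fin n)}
    (hρ : Differentiable ℝ ρ) (hρ' : DifferentiableAt ℝ (fderiv ℝ ρ) w)
    (h : EuclideanSpace ℂ (Fin n)) :
    2 * ((∑ j, ∑ i, wirt (wirt (fun z => (ρ z : ℂ)) j) i w * h i * h j).re +
      (leviForm ρ w h).re) = fderiv ℝ (fderiv ℝ ρ) w h h := by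
  have hD2 := hasFDerivAt_fderiv_ofReal_comp hρ hρ'
  have hre := re_apply_apply_eq_two_mul_re_sum_wirtCLM (fderiv ℝ (fderiv ℝ fun z => (ρ z : ℂ)) w)
    (fun u v => by simp [hD2.fderiv]) h
  simp only [hD2.fderiv, comp_apply, compL_apply, ofRealCLM_apply, ofReal_re] at hre
  have hg := hD2.differentiableAt
  simp only [leviForm, wirt_eq_wirtCLM, fderiv_wirt hg, fderiv_wirtBar hg, hD2.fderiv]
  exact hre.symm

lemma two_mul_re_etaPairing_sub {w : EuclideanSpace ℂ (Fin n)} (hρ : Differentiable ℝ ρ)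
    (hρ' : DifferentiableAt ℝ (fderiv ℝ ρ) w) (z : EuclideanSpace ℂ (Fin n)) :
    2 * (etaPairing ρ w z).re - (ρ w - ρ z + (leviForm ρ w (w - z)).re) =
      ρ z - ρ w - fderiv ℝ ρ w (z - w) - (1 / 2 : ℝ) • fderiv ℝ (fderiv ℝ ρ) w (z - w) (z - w) := by
  have hsub : ∀ i, w i - z i = (w - z) i := fun _ => rfl
  have hneg : z - w = -(w - z) := (neg_sub w z).symm
  have hlin := two_mul_re_sum_wirt_mul (hρ w) (w - z)
  have hquad := two_mul_re_sum_wirt_wirt_add_re_leviForm hρ hρ' (w - z)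
  have hsplit : etaPairing ρ w z = ∑ j, wirt (fun z => (ρ z : ℂ)) j w * (w - z) j -
      (1 / 2 : ℂ) * ∑ j, ∑ i, wirt (wirt (fun z => (ρ z : ℂ)) j) i w * (w - z) i * (w - z) j := by
    simp only [etaPairing, hsub, sub_mul, Finset.sum_sub_distrib, Finset.mul_sum, Finset.sum_mul,
      mul_assoc]
  simp only [hsplit, sub_re, re_ofReal_mul, hneg, map_neg, neg_apply, smul_eq_mul,
    show (1 / 2 : ℂ) = ((1 / 2 : ℝ) : ℂ) by norm_num]
  linarith

lemma isLittleO_two_mul_re_etaPairing_sub {w : EuclideanSpace ℂ (Fin n)}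
    (hρ : Differentiable ℝ ρ) (hρ' : DifferentiableAt ℝ (fderiv ℝ ρ) w) :
    (fun z => 2 * (etaPairing ρ w z).re - (ρ w - ρ z + (leviForm ρ w (w - z)).re))
      =o[𝓝 w] fun z => ‖w - z‖ ^ 2 := by
  simpa only [two_mul_re_etaPairing_sub hρ hρ', norm_sub_rev w] using taylor_two_isLittleO hρ hρ'

end RealFunction

theorem stmt15 {n : ℕ} (ρ : EuclideanSpace ℂ (Fin n) → ℝ) (hρ : ContDiff ℝ 2 ρ)
    (w : EuclideanSpace ℂ (Fin n)) (c : ℝ) (hc : 0 < c)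
    (hHess : ∀ v : EuclideanSpace ℂ (Fin n),
      c * ‖v‖ ^ 2 ≤ (∑ i, ∑ j,
        wirt (wirtBar (fun z => (ρ z : ℂ)) j) i w * v i * (starRingEnd ℂ) (v j)).re) :
    -- second-order Taylor expansion:
    -- 2 Re⟨η(w,z), w - z⟩ = ρ(w) - ρ(z) + Σᵢⱼ ∂²ρ/∂ζᵢ∂ζ̄ⱼ(w)(wᵢ-zᵢ)(w̄ⱼ-z̄ⱼ) + o(|w-z|²)
    ((fun z : EuclideanSpace ℂ (Fin n) =>
        2 * (∑ j, (wirt (fun z' => (ρ z' : ℂ)) j w -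
              (1 / 2 : ℂ) * ∑ i, wirt (wirt (fun z' => (ρ z' : ℂ)) j) i w * (w i - z i)) *
            (w j - z j)).re
          - (ρ w - ρ z +
              (∑ i, ∑ j, wirt (wirtBar (fun z' => (ρ z' : ℂ)) j) i w *
                (w i - z i) * (starRingEnd ℂ) (w j - z j)).re))
      =o[nhds w] fun z => ‖w - z‖ ^ 2) ∧
    -- consequence: the lower bound near w
    (ρ w = 0 → ∃ r > (0 : ℝ), ∀ z : EuclideanSpace ℂ (Fin n), ‖w - z‖ < r → ρ z ≤ 0 →
      (c / 4) * ‖w - z‖ ^ 2 ≤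
        (∑ j, (wirt (fun z' => (ρ z' : ℂ)) j w -
            (1 / 2 : ℂ) * ∑ i, wirt (wirt (fun z' => (ρ z' : ℂ)) j) i w * (w i - z i)) *
          (w j - z j)).re) := by
  have hρ' : DifferentiableAt ℝ (fderiv ℝ ρ) w :=
    (hρ.fderiv_right (m := 1) (by norm_num)).differentiable one_ne_zero w
  have hTaylor := isLittleO_two_mul_re_etaPairing_sub (hρ.differentiable two_ne_zero) hρ'
  refine ⟨hTaylor, fun hw => ?_⟩
  obtain ⟨r, hr, hball⟩ := Metric.eventually_nhds_iff.1 (hTaylor.def (half_pos hc))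
  refine ⟨r, hr, fun z hz hρz => ?_⟩
  have hclose := hball (by rwa [dist_comm, dist_eq_norm])
  rw [Real.norm_eq_abs, norm_pow, norm_norm, abs_le] at hclose
  have hlevi : c * ‖w - z‖ ^ 2 ≤ (leviForm ρ w (w - z)).re := hHess (w - z)
  show c / 4 * ‖w - z‖ ^ 2 ≤ (etaPairing ρ w z).re
  linarith [hclose.1]
end
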